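/- Let V be a finite set, w : V × V → ℝ a symmetric function, and C₁,…,C_k pairwise disjoint subsets of V. Then there exist subsets A_i ⊆ C_i (for i = 1,…,k) such that |Σ_{i=1}^{k} Σ_{u∈A_i, v∈C_i∖A_i} w(u,v)| ≥ (1/2)·|Σ_{i=1}^{k} Σ_{{u,v}⊆C_i, u≠v} w(u,v)|, where the inner sum on the right ranges over unordered pairs of distinct elements of C_i. -/
import Mathlib


open Finset

/-- `pairSum w S T = Σ_{u ∈ S, v ∈ T, u ≠ v} w u v`. -/
noncomputable def pairSum {V : Type*} [Fintype V] [DecidableEq V]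
    (w : V → V → ℝ) (S T : Finset V) : ℝ :=
  ∑ u ∈ S, ∑ v ∈ T, if u = v then 0 else w u v

/-- The sum of `w` over unordered pairs of distinct elements of `C`. -/
noncomputable def innerSum {V : Type*} [Fintype V] [DecidableEq V]
    (w : V → V → ℝ) (C : Finset V) : ℝ :=
  (1 / 2) * pairSum w C C

lemma cut_eq_pairSum {V : Type*} [Fintype V] [DecidableEq V]
    (w : V → V → ℝ) (A B : Finset V) (h : Disjoint A B) :
    ∑ u ∈ A, ∑ v ∈ B, w u v = pairSum w A B := by
  unfold pairSum
  refine sum_congr rfl fun u hu => sum_congr rfl fun v hv => ?_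
  rw [if_neg]
  rintro rfl
  exact Finset.disjoint_left.mp h hu hv

lemma count_lemma {V : Type*} [Fintype V] [DecidableEq V] (C : Finset V) {u v : V}
    (hu : u ∈ C) (hv : v ∈ C) (huv : u ≠ v) :
    (C.powerset.filter fun A => u ∈ A ∧ v ∉ A).card = 2 ^ (C.card - 2) := by
  have hcard : ((C.erase u).erase v).card = C.card - 2 := by
    rw [card_erase_of_mem (mem_erase.mpr ⟨huv.symm, hv⟩), card_erase_of_mem hu]
    omega
  rw [← hcard, ← card_powerset]
  apply Finset.card_bij' (fun A _ => A.erase u) (fun B _ => insert u B)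
  · intro A hA
    simp only [mem_filter, mem_powerset] at hA
    exact insert_erase hA.2.1
  · intro B hB
    rw [mem_powerset] at hB
    apply erase_insert
    intro huB
    have := hB huB
    rw [mem_erase, mem_erase] at this
    exact this.2.1 rfl
  · intro A hA
    simp only [mem_filter, mem_powerset] at hA
    obtain ⟨hAC, huA, hvA⟩ := hA
    rw [mem_powerset]
    intro x hx
    rw [mem_erase] at hx
    refine mem_erase.mpr ⟨fun e => hvA (e ▸ hx.2), mem_erase.mpr ⟨hx.1, hAC hx.2⟩⟩
  · intro B hB
    rw [mem_powerset] at hB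
    simp only [mem_filter, mem_powerset]
    have hB' : ∀ x ∈ B, x ≠ v ∧ x ≠ u ∧ x ∈ C := by
      intro x hx
      have := hB hx
      rw [mem_erase, mem_erase] at this
      exact ⟨this.1, this.2.1, this.2.2⟩
    refine ⟨?_, mem_insert_self _ _, ?_⟩
    · intro x hx
      rcases mem_insert.mp hx with rfl | hx
      · exact hu
      · exact (hB' x hx).2.2
    · intro hvmem
      rcases mem_insert.mp hvmem with e | hx
      · exact huv e.symm
      · exact (hB' v hx).1 rfl

lemma total_lemma {V : Type*} [Fintype V] [DecidableEq V]
    (w : V → V → ℝ) (C : Finset V) :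
    ∑ A ∈ C.powerset, pairSum w A (C \ A)
      = 2 ^ (C.card - 2) * pairSum w C C := by
  have step : ∀ A ∈ C.powerset, pairSum w A (C \ A) =
      ∑ u ∈ C, ∑ v ∈ C, if u ∈ A ∧ v ∉ A then (if u = v then 0 else w u v) else 0 := by
    intro A hA
    rw [mem_powerset] at hA
    unfold pairSum
    symm
    rw [← Finset.sum_subset hA (fun x _ hx => by
      refine Finset.sum_eq_zero fun v _ => ?_
      simp [hx])]
    refine sum_congr rfl fun u hu => ?_
    rw [← Finset.sum_subset (sdiff_subset (s := C) (t := A))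
      (fun x hxC hx => by
        simp only [mem_sdiff, not_and, not_not] at hx
        simp [hx hxC])]
    refine sum_congr rfl fun v hv => ?_
    have hv' := mem_sdiff.mp hv
    simp [hu, hv'.2]
  rw [Finset.sum_congr rfl step, Finset.sum_comm]
  unfold pairSum
  rw [Finset.mul_sum]
  refine sum_congr rfl fun u hu => ?_
  rw [Finset.sum_comm, Finset.mul_sum]
  refine sum_congr rfl fun v hv => ?_
  rw [← Finset.sum_filter, Finset.sum_const, nsmul_eq_mul]
  by_cases huv : u = v
  · simp [huv]
  · rw [count_lemma C hu hv huv, if_neg huv]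
    push_cast
    ring

lemma pairSum_zero_of_small {V : Type*} [Fintype V] [DecidableEq V]
    (w : V → V → ℝ) (C : Finset V) (hc : C.card ≤ 1) :
    pairSum w C C = 0 := by
  unfold pairSum
  refine Finset.sum_eq_zero fun u hu => Finset.sum_eq_zero fun v hv => ?_
  rw [if_pos (Finset.card_le_one.mp hc u hu v hv)]

lemma exists_ge {V : Type*} [Fintype V] [DecidableEq V]
    (w : V → V → ℝ) (C : Finset V) :
    ∃ A ⊆ C, innerSum w C / 2 ≤ pairSum w A (C \ A) := by
  by_cases hc : C.card ≤ 1
  · refine ⟨∅, empty_subset _, ?_⟩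
    rw [innerSum, pairSum_zero_of_small w C hc]
    simp [pairSum]
  · push_neg at hc
    have hsum : ∑ _A ∈ C.powerset, (innerSum w C / 2) ≤
        ∑ A ∈ C.powerset, pairSum w A (C \ A) := by
      rw [total_lemma, Finset.sum_const, card_powerset, nsmul_eq_mul]
      apply le_of_eq
      obtain ⟨m, hm⟩ : ∃ m, C.card = m + 2 := ⟨C.card - 2, (Nat.sub_add_cancel hc).symm⟩
      rw [innerSum, hm]
      simp only [Nat.add_sub_cancel]
      push_cast
      rw [pow_add]
      ring
    obtain ⟨A, hA, h⟩ := Finset.exists_le_of_sum_le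
      (Finset.powerset_nonempty C) hsum
    exact ⟨A, mem_powerset.mp hA, h⟩

lemma exists_le {V : Type*} [Fintype V] [DecidableEq V]
    (w : V → V → ℝ) (C : Finset V) :
    ∃ A ⊆ C, pairSum w A (C \ A) ≤ innerSum w C / 2 := by
  obtain ⟨A, hAC, h⟩ := exists_ge (fun u v => -(w u v)) C
  have hps : ∀ S T : Finset V, pairSum (fun u v => -(w u v)) S T = -pairSum w S T := by
    intro S T
    unfold pairSum
    rw [← Finset.sum_neg_distrib]
    refine sum_congr rfl fun u hu => ?_
    rw [← Finset.sum_neg_distrib]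
    refine sum_congr rfl fun v hv => ?_
    by_cases huv : u = v <;> simp [huv]
  have hin : innerSum (fun u v => -(w u v)) C = -innerSum w C := by
    unfold innerSum; rw [hps]; ring
  refine ⟨A, hAC, ?_⟩
  rw [hin, hps] at h
  linarith

theorem stmt4 {V : Type*} [Fintype V] [DecidableEq V]
    (w : V → V → ℝ) (hsymm : ∀ u v, w u v = w v u)
    {k : ℕ} (C : Fin k → Finset V)
    (hdisj : ∀ i j, i ≠ j → Disjoint (C i) (C j)) :
    ∃ A : Fin k → Finset V, (∀ i, A i ⊆ C i) ∧
      (1 / 2) * |∑ i, innerSum w (C i)| ≤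
        |∑ i, ∑ u ∈ A i, ∑ v ∈ C i \ A i, w u v| := by
  set S := ∑ i, innerSum w (C i) with hS
  choose Ahi hhi1 hhi2 using fun i => exists_ge w (C i)
  choose Alo hlo1 hlo2 using fun i => exists_le w (C i)
  rcases le_or_gt 0 S with hpos | hneg
  · refine ⟨Ahi, hhi1, ?_⟩
    have hcut : ∀ i, ∑ u ∈ Ahi i, ∑ v ∈ C i \ Ahi i, w u v
        = pairSum w (Ahi i) (C i \ Ahi i) :=
      fun i => cut_eq_pairSum w _ _ (Finset.disjoint_sdiff)
    have h1 : S / 2 ≤ ∑ i, ∑ u ∈ Ahi i, ∑ v ∈ C i \ Ahi i, w u v := by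
      rw [hS, Finset.sum_div]
      exact Finset.sum_le_sum fun i _ => (hcut i) ▸ hhi2 i
    calc (1/2) * |S| = S / 2 := by rw [abs_of_nonneg hpos]; ring
      _ ≤ ∑ i, ∑ u ∈ Ahi i, ∑ v ∈ C i \ Ahi i, w u v := h1
      _ ≤ |∑ i, ∑ u ∈ Ahi i, ∑ v ∈ C i \ Ahi i, w u v| := le_abs_self _
  · refine ⟨Alo, hlo1, ?_⟩
    have hcut : ∀ i, ∑ u ∈ Alo i, ∑ v ∈ C i \ Alo i, w u v
        = pairSum w (Alo i) (C i \ Alo i) :=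
      fun i => cut_eq_pairSum w _ _ (Finset.disjoint_sdiff)
    have h1 : ∑ i, ∑ u ∈ Alo i, ∑ v ∈ C i \ Alo i, w u v ≤ S / 2 := by
      rw [hS, Finset.sum_div]
      exact Finset.sum_le_sum fun i _ => (hcut i) ▸ hlo2 i
    calc (1/2) * |S| = -S / 2 := by rw [abs_of_neg hneg]; ring
      _ ≤ -(∑ i, ∑ u ∈ Alo i, ∑ v ∈ C i \ Alo i, w u v) := by linarith
      _ ≤ |∑ i, ∑ u ∈ Alo i, ∑ v ∈ C i \ Alo i, w u v| := neg_le_abs _
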